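/- arXiv:2005.00421 — 2 statements merged into one kernel-verified Lean document; each statement's English description precedes it below -/
import Mathlib

section
/- A Borel measurable function α : [1,∞) → (0,∞) belongs to the class RO (i.e., there exist b > 1 and c ≥ 1 such that c⁻¹ ≤ α(λt)/α(t) ≤ c for all t ≥ 1 and λ ∈ [1,b]) if and only if α admits a representation α(t) = exp(β(t) + ∫₁ᵗ γ(τ)/τ dτ) for t ≥ 1, where β and γ are Borel measurable real-valued functions bounded on [1,∞). -/
/-!
Let `A = log α` on `[1, ∞)`. The condition defining RO says that `A` oscillates by at most
`log c` on every interval `[t, b t]`; chaining such intervals shows that `A` is locally bounded.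
Take `γ(τ) = (A(b τ) - A(τ)) / log b`, which is bounded. The integral `∫₁ᵗ γ(τ) dτ/τ` telescopes
to the logarithmic mean `(log b)⁻¹ ∫ₜ^{bt} A(σ) dσ/σ` minus a constant, and this mean differs
from `A(t)` by at most the oscillation of `A` on `[t, b t]`, so `β = A - ∫₁ᵗ γ(τ) dτ/τ` is bounded.
Conversely, a representation gives `|log (α(l t) / α(t))| ≤ 2M + M (l - 1)`.
-/

noncomputable section
open MeasureTheory Filter Set Real

/-- Class RO of RO-varying (in the sense of Avakumović) functions at infinity:
Borel measurable on `[1,∞)`, positive there, with `c⁻¹ ≤ α(l*t)/α(t) ≤ c`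
for all `t ≥ 1`, `l ∈ [1,b]`. -/
def RO (α : ℝ → ℝ) : Prop :=
  (∀ t, 1 ≤ t → 0 < α t) ∧ (Measurable fun t : Set.Ici (1:ℝ) => α t.1) ∧
  ∃ b : ℝ, 1 < b ∧ ∃ c : ℝ, 1 ≤ c ∧ ∀ t, 1 ≤ t → ∀ l, 1 ≤ l → l ≤ b →
    c⁻¹ ≤ α (l * t) / α t ∧ α (l * t) / α t ≤ c

/-- Exponents admitting a lower power bound `c * l^s ≤ α(l*t)/α(t)`. -/
def roLowerSet (α : ℝ → ℝ) : Set ℝ :=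
  {s | ∃ c : ℝ, 0 < c ∧ ∀ t, 1 ≤ t → ∀ l, 1 ≤ l → c * l ^ s ≤ α (l * t) / α t}

/-- Exponents admitting an upper power bound `α(l*t)/α(t) ≤ c * l^s`. -/
def roUpperSet (α : ℝ → ℝ) : Set ℝ :=
  {s | ∃ c : ℝ, 0 < c ∧ ∀ t, 1 ≤ t → ∀ l, 1 ≤ l → α (l * t) / α t ≤ c * l ^ s}

/-- Lower Matuszewska index. -/
def sigma0 (α : ℝ → ℝ) : ℝ := sSup (roLowerSet α)

/-- Upper Matuszewska index. -/
def sigma1 (α : ℝ → ℝ) : ℝ := sInf (roUpperSet α)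

lemma measurable_indicator_of_measurable_restrict {α β : Type*} [MeasurableSpace α]
    [MeasurableSpace β] [Zero β] {s : Set α} {f : α → β} (hs : MeasurableSet s)
    (hf : Measurable fun x : s => f x) : Measurable (s.indicator f) := by
  refine measurable_of_restrict_of_restrict_compl hs ?_ ?_
  · convert hf using 1
    funext x
    exact indicator_of_mem x.2 f
  · convert (measurable_const : Measurable fun _ : (sᶜ : Set α) => (0 : β)) using 1
    funext x
    exact indicator_of_notMem x.2 f

lemma abs_div_le_abs_of_one_le {x y : ℝ} (hx : 1 ≤ x) : |y / x| ≤ |y| := by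
  rw [abs_div]
  exact div_le_self (abs_nonneg y) (hx.trans (le_abs_self x))

lemma intervalIntegrable_of_abs_le {g : ℝ → ℝ} {a b C : ℝ} (hg : Measurable g)
    (hC : ∀ x ∈ uIoc a b, |g x| ≤ C) : IntervalIntegrable g volume a b :=
  (intervalIntegrable_const (c := C)).mono_fun' hg.aestronglyMeasurable
    ((ae_restrict_iff' measurableSet_uIoc).2 (Eventually.of_forall fun x hx =>
      (Real.norm_eq_abs _).trans_le (hC x hx)))

lemma intervalIntegrable_indicator_Ici {f : ℝ → ℝ} {a C : ℝ}
    (hf : Measurable fun t : Ici a => f t) (hC : ∀ t, a ≤ t → |f t| ≤ C) (p q : ℝ) :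
    IntervalIntegrable ((Ici a).indicator f) volume p q := by
  refine intervalIntegrable_of_abs_le (C := |C|)
    (measurable_indicator_of_measurable_restrict measurableSet_Ici hf) fun x _ => ?_
  by_cases hx : a ≤ x
  · rw [indicator_of_mem (mem_Ici.2 hx)]
    exact (hC x hx).trans (le_abs_self C)
  · rw [indicator_of_notMem (by simpa using hx), abs_zero]
    exact abs_nonneg C

lemma setIntegral_Ioc_eq_integral_indicator_Ici (f : ℝ → ℝ) {a t : ℝ} (ht : a ≤ t) :
    ∫ τ in Ioc a t, f τ = ∫ τ in a..t, (Ici a).indicator f τ := by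
  rw [intervalIntegral.integral_of_le ht]
  exact setIntegral_congr_fun measurableSet_Ioc fun τ hτ =>
    (indicator_of_mem (mem_Ici.2 hτ.1.le) f).symm

lemma measurable_setIntegral_Ioc {f : ℝ → ℝ} {a C : ℝ} (hf : Measurable fun t : Ici a => f t)
    (hC : ∀ t, a ≤ t → |f t| ≤ C) : Measurable fun t : Ici a => ∫ τ in Ioc a t, f τ := by
  have hprim : Continuous fun t => ∫ τ in a..t, (Ici a).indicator f τ :=
    intervalIntegral.continuous_primitive (intervalIntegrable_indicator_Ici hf hC) a
  convert hprim.measurable.comp measurable_subtype_coe using 1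
  funext t
  exact setIntegral_Ioc_eq_integral_indicator_Ici f t.2

lemma abs_setIntegral_Ioc_div_sub_le {γ : ℝ → ℝ} {M t s : ℝ}
    (hγ : Measurable fun τ : Ici (1 : ℝ) => γ τ) (hM : ∀ τ, 1 ≤ τ → |γ τ| ≤ M)
    (ht : 1 ≤ t) (hts : t ≤ s) :
    |(∫ τ in Ioc 1 s, γ τ / τ) - ∫ τ in Ioc 1 t, γ τ / τ| ≤ M / t * (s - t) := by
  have hM' : ∀ τ, 1 ≤ τ → |γ τ / τ| ≤ M := fun τ hτ =>
    (abs_div_le_abs_of_one_le hτ).trans (hM τ hτ)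
  have hint := intervalIntegrable_indicator_Ici (hγ.div measurable_subtype_coe) hM'
  rw [setIntegral_Ioc_eq_integral_indicator_Ici _ (ht.trans hts),
    setIntegral_Ioc_eq_integral_indicator_Ici _ ht,
    intervalIntegral.integral_interval_sub_left (hint 1 s) (hint 1 t)]
  have hbound : ∀ x ∈ uIoc t s, ‖(Ici 1).indicator (fun τ => γ τ / τ) x‖ ≤ M / t := by
    intro x hx
    rw [uIoc_of_le hts] at hx
    have hx1 : 1 ≤ x := ht.trans hx.1.le
    rw [indicator_of_mem (mem_Ici.2 hx1), Real.norm_eq_abs, abs_div,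
      abs_of_pos (show (0 : ℝ) < x by linarith)]
    exact div_le_div₀ ((abs_nonneg _).trans (hM 1 le_rfl)) (hM x hx1) (by linarith) hx.1.le
  simpa [abs_of_nonneg (sub_nonneg.2 hts)] using
    intervalIntegral.norm_integral_le_of_norm_le_const hbound

def OscillationLE (A : ℝ → ℝ) (b K : ℝ) : Prop :=
  ∀ t, 1 ≤ t → ∀ σ ∈ Icc t (b * t), |A σ - A t| ≤ K

namespace OscillationLE

variable {A : ℝ → ℝ} {b K : ℝ}

lemma nonneg (h : OscillationLE A b K) (hb : 1 ≤ b) : 0 ≤ K := by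
  simpa using h 1 le_rfl 1 ⟨le_rfl, by simpa using hb⟩

lemma abs_sub_le_of_mem_Icc_pow_mul (h : OscillationLE A b K) (hb : 1 ≤ b) (n : ℕ) {t : ℝ}
    (ht : 1 ≤ t) {σ : ℝ} (hσ : σ ∈ Icc t (b ^ n * t)) : |A σ - A t| ≤ n * K := by
  induction n generalizing σ with
  | zero =>
    obtain rfl : σ = t := le_antisymm (by simpa using hσ.2) hσ.1
    simp
  | succ n ih =>
    have hbn : t ≤ b ^ n * t := le_mul_of_one_le_left (by linarith) (one_le_pow₀ hb)
    rcases le_total σ (b ^ n * t) with hσn | hσn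
    · calc |A σ - A t| ≤ n * K := ih ⟨hσ.1, hσn⟩
        _ ≤ (n + 1 : ℕ) * K := by gcongr; exacts [h.nonneg hb, by omega]
    · have hlast := h (b ^ n * t) (ht.trans hbn) σ
        ⟨hσn, by rw [← mul_assoc, ← pow_succ']; exact hσ.2⟩
      calc |A σ - A t| ≤ |A σ - A (b ^ n * t)| + |A (b ^ n * t) - A t| := abs_sub_le _ _ _
        _ ≤ K + n * K := add_le_add hlast (ih ⟨hbn, le_rfl⟩)
        _ = (n + 1 : ℕ) * K := by push_cast; ring

lemma exists_abs_le_of_mem_Icc (h : OscillationLE A b K) (hb : 1 < b) (T : ℝ) :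
    ∃ C, ∀ σ ∈ Icc 1 T, |A σ| ≤ C := by
  obtain ⟨n, hn⟩ := pow_unbounded_of_one_lt T hb
  refine ⟨|A 1| + n * K, fun σ hσ => ?_⟩
  have := h.abs_sub_le_of_mem_Icc_pow_mul hb.le n le_rfl ⟨hσ.1, by linarith [hσ.2]⟩
  linarith [abs_sub_abs_le_abs_sub (A σ) (A 1)]

lemma intervalIntegrable_div (h : OscillationLE A b K) (hb : 1 < b) (hA : Measurable A)
    {p q : ℝ} (hp : 1 ≤ p) (hq : 1 ≤ q) : IntervalIntegrable (fun σ => A σ / σ) volume p q := by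
  obtain ⟨C, hC⟩ := h.exists_abs_le_of_mem_Icc hb (max p q)
  refine intervalIntegrable_of_abs_le (C := C) (hA.div measurable_id) fun x hx => ?_
  have hx' := uIoc_subset_uIcc hx
  have hx1 : 1 ≤ x := (le_min hp hq).trans hx'.1
  exact (abs_div_le_abs_of_one_le hx1).trans (hC x ⟨hx1, hx'.2⟩)

lemma integral_sub_comp_mul_div (h : OscillationLE A b K) (hb : 1 < b) (hA : Measurable A)
    {t : ℝ} (ht : 1 ≤ t) :
    ∫ τ in 1..t, (A (b * τ) - A τ) / τ = (∫ σ in t..b * t, A σ / σ) - ∫ σ in 1..b, A σ / σ := by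
  have hb0 : b ≠ 0 := by positivity
  have hbt : 1 ≤ b * t := one_le_mul_of_one_le_of_one_le hb.le ht
  have hint := fun {p q : ℝ} (hp : 1 ≤ p) (hq : 1 ≤ q) => h.intervalIntegrable_div hb hA hp hq
  have hdil : IntervalIntegrable (fun τ => b * (A (b * τ) / (b * τ))) volume 1 t := by
    have := (hint hb.le hbt).comp_mul_left (c := b)
    rw [div_self hb0, mul_div_cancel_left₀ t hb0] at this
    exact this.const_mul b
  have hrw : ∀ τ, (A (b * τ) - A τ) / τ = b * (A (b * τ) / (b * τ)) - A τ / τ := fun τ => by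
    rw [sub_div, mul_div_assoc', mul_div_mul_left _ _ hb0]
  simp_rw [hrw]
  rw [intervalIntegral.integral_sub hdil (hint le_rfl ht), intervalIntegral.integral_const_mul,
    ← smul_eq_mul, intervalIntegral.smul_integral_comp_mul_left (fun σ => A σ / σ) b, mul_one,
    intervalIntegral.integral_interval_sub_interval_comm' (hint hb.le hbt) (hint le_rfl ht)
      (hint hb.le le_rfl)]

lemma abs_sub_inv_log_mul_integral_div_le (h : OscillationLE A b K) (hb : 1 < b)
    (hA : Measurable A) {t : ℝ} (ht : 1 ≤ t) :
    |A t - (log b)⁻¹ * ∫ σ in t..b * t, A σ / σ| ≤ K * (b - 1) / log b := by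
  have hlog : 0 < log b := log_pos hb
  have ht0 : 0 < t := by linarith
  have htbt : t ≤ b * t := le_mul_of_one_le_left ht0.le hb.le
  have hinv : IntervalIntegrable (fun σ => A t * σ⁻¹) volume t (b * t) :=
    (intervalIntegral.intervalIntegrable_inv (fun x hx => by
      rw [uIcc_of_le htbt] at hx; exact (ht0.trans_le hx.1).ne') continuousOn_id).const_mul _
  -- `∫ σ in t..b * t, A t / σ = A t * log b`: only the oscillation of `A` on `[t, b t]` is left
  have hsplit : ∫ σ in t..b * t, A σ / σ = A t * log b + ∫ σ in t..b * t, (A σ - A t) / σ := by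
    have hsub := intervalIntegral.integral_sub
      (h.intervalIntegrable_div hb hA ht (ht.trans htbt)) hinv
    rw [intervalIntegral.integral_const_mul, integral_inv_of_pos ht0 (by positivity),
      mul_div_cancel_right₀ b ht0.ne'] at hsub
    rw [← sub_eq_iff_eq_add', ← hsub]
    congr 1
    funext σ
    ring
  have hosc : |∫ σ in t..b * t, (A σ - A t) / σ| ≤ K * (b - 1) := by
    have hbound : ∀ x ∈ uIoc t (b * t), ‖(A x - A t) / x‖ ≤ K / t := by
      intro x hx
      rw [uIoc_of_le htbt] at hx
      rw [Real.norm_eq_abs, abs_div, abs_of_pos (ht0.trans hx.1)]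
      exact div_le_div₀ (h.nonneg hb.le) (h t ht x ⟨hx.1.le, hx.2⟩) ht0 hx.1.le
    have := intervalIntegral.norm_integral_le_of_norm_le_const hbound
    rwa [Real.norm_eq_abs, abs_of_nonneg (sub_nonneg.2 htbt), div_mul_eq_mul_div,
      show K * (b * t - t) / t = K * (b - 1) by field_simp] at this
  rw [hsplit, show ∀ J, A t - (log b)⁻¹ * (A t * log b + J) = -(J / log b) from fun J => by
    field_simp; ring, abs_neg, abs_div, abs_of_pos hlog]
  exact div_le_div_of_nonneg_right hosc hlog.le

end OscillationLE

lemma oscillationLE_indicator_log {α : ℝ → ℝ} {b c : ℝ} (hpos : ∀ t, 1 ≤ t → 0 < α t)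
    (hc : 0 < c) (hratio : ∀ t, 1 ≤ t → ∀ l, 1 ≤ l → l ≤ b →
      c⁻¹ ≤ α (l * t) / α t ∧ α (l * t) / α t ≤ c) :
    OscillationLE ((Ici 1).indicator fun t => log (α t)) b (log c) := by
  intro t ht σ hσ
  have ht0 : 0 < t := by linarith
  have hσ1 : 1 ≤ σ := ht.trans hσ.1
  obtain ⟨hlo, hhi⟩ := hratio t ht (σ / t) ((one_le_div ht0).2 hσ.1) ((div_le_iff₀ ht0).2 hσ.2)
  rw [div_mul_cancel₀ σ ht0.ne'] at hlo hhi
  have hq : 0 < α σ / α t := div_pos (hpos σ hσ1) (hpos t ht)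
  rw [indicator_of_mem (mem_Ici.2 hσ1), indicator_of_mem (mem_Ici.2 ht),
    ← log_div (hpos σ hσ1).ne' (hpos t ht).ne', abs_le]
  refine ⟨?_, log_le_log hq hhi⟩
  simpa [log_inv] using log_le_log (inv_pos.2 hc) hlo

theorem exists_exp_add_setIntegral_of_RO {α : ℝ → ℝ} (h : RO α) :
    ∃ β γ : ℝ → ℝ, (Measurable fun t : Ici (1 : ℝ) => β t) ∧
      (Measurable fun t : Ici (1 : ℝ) => γ t) ∧
      (∃ M : ℝ, ∀ t, 1 ≤ t → |β t| ≤ M ∧ |γ t| ≤ M) ∧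
      (∀ t, 1 ≤ t → α t = exp (β t + ∫ τ in Ioc 1 t, γ τ / τ)) := by
  obtain ⟨hpos, hmeas, b, hb, c, hc, hratio⟩ := h
  set A := (Ici (1 : ℝ)).indicator fun t => log (α t)
  have hA : Measurable A :=
    measurable_indicator_of_measurable_restrict measurableSet_Ici (measurable_log.comp hmeas)
  have hosc : OscillationLE A b (log c) := oscillationLE_indicator_log hpos (by linarith) hratio
  have hlog : 0 < log b := log_pos hb
  set γ := fun τ => (A (b * τ) - A τ) / log b
  have hγm : Measurable γ := ((hA.comp (measurable_const_mul b)).sub hA).div_const _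
  have hγ : ∀ τ, 1 ≤ τ → |γ τ| ≤ log c / log b := fun τ hτ => by
    rw [abs_div, abs_of_pos hlog]
    exact div_le_div_of_nonneg_right
      (hosc τ hτ (b * τ) ⟨le_mul_of_one_le_left (by linarith) hb.le, le_rfl⟩) hlog.le
  have hγτ : ∀ τ, 1 ≤ τ → |γ τ / τ| ≤ log c / log b := fun τ hτ =>
    (abs_div_le_abs_of_one_le hτ).trans (hγ τ hτ)
  have hintegral : ∀ t, 1 ≤ t → ∫ τ in Ioc 1 t, γ τ / τ =
      (log b)⁻¹ * ((∫ σ in t..b * t, A σ / σ) - ∫ σ in 1..b, A σ / σ) := fun t ht => by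
    rw [intervalIntegral.integral_of_le ht |>.symm, ← hosc.integral_sub_comp_mul_div hb hA ht,
      ← intervalIntegral.integral_const_mul]
    congr 1
    funext τ
    simp only [γ]
    ring
  refine ⟨fun t => A t - ∫ τ in Ioc 1 t, γ τ / τ, γ, (hA.comp measurable_subtype_coe).sub
    (measurable_setIntegral_Ioc (hγm.comp measurable_subtype_coe |>.div measurable_subtype_coe)
      hγτ),
    hγm.comp measurable_subtype_coe,
    ⟨max (log c * (b - 1) / log b + |(log b)⁻¹ * ∫ σ in 1..b, A σ / σ|) (log c / log b),
      fun t ht => ⟨le_max_of_le_left ?_, le_max_of_le_right (hγ t ht)⟩⟩, fun t ht => ?_⟩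
  · dsimp only
    rw [hintegral t ht, mul_sub, ← sub_add]
    exact (abs_add_le _ _).trans
      (add_le_add_left (hosc.abs_sub_inv_log_mul_integral_div_le hb hA ht) _)
  · rw [sub_add_cancel, show A t = log (α t) from indicator_of_mem (mem_Ici.2 ht) _,
      exp_log (hpos t ht)]

theorem RO_of_exp_add_setIntegral {α β γ : ℝ → ℝ} {M : ℝ}
    (hβ : Measurable fun t : Ici (1 : ℝ) => β t) (hγ : Measurable fun t : Ici (1 : ℝ) => γ t)
    (hM : ∀ t, 1 ≤ t → |β t| ≤ M ∧ |γ t| ≤ M)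
    (hα : ∀ t, 1 ≤ t → α t = exp (β t + ∫ τ in Ioc 1 t, γ τ / τ)) : RO α := by
  have hM0 : 0 ≤ M := (abs_nonneg _).trans (hM 1 le_rfl).1
  refine ⟨fun t ht => hα t ht ▸ exp_pos _, ?_, 2, one_lt_two, exp (3 * M),
    one_le_exp (by positivity), fun t ht l hl hl2 => ?_⟩
  · have hγτ : ∀ τ, 1 ≤ τ → |γ τ / τ| ≤ M := fun τ hτ =>
      (abs_div_le_abs_of_one_le hτ).trans (hM τ hτ).2
    rw [show (fun t : Ici (1 : ℝ) => α t) =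
        fun t : Ici (1 : ℝ) => exp (β t + ∫ τ in Ioc 1 t.1, γ τ / τ) from
      funext fun t => hα t t.2]
    exact measurable_exp.comp
      (hβ.add (measurable_setIntegral_Ioc (hγ.div measurable_subtype_coe) hγτ))
  have ht0 : 0 < t := by linarith
  have hlt : t ≤ l * t := le_mul_of_one_le_left ht0.le hl
  have hratio : α (l * t) / α t = exp ((β (l * t) - β t) +
      ((∫ τ in Ioc 1 (l * t), γ τ / τ) - ∫ τ in Ioc 1 t, γ τ / τ)) := by
    rw [hα _ (ht.trans hlt), hα t ht, ← exp_sub]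
    ring_nf
  have hintegral := abs_setIntegral_Ioc_div_sub_le hγ (fun τ hτ => (hM τ hτ).2) ht hlt
  have hlength : M / t * (l * t - t) ≤ M := by
    rw [div_mul_eq_mul_div, div_le_iff₀ ht0]
    exact mul_le_mul_of_nonneg_left (by nlinarith) hM0
  have hbound : |(β (l * t) - β t) +
      ((∫ τ in Ioc 1 (l * t), γ τ / τ) - ∫ τ in Ioc 1 t, γ τ / τ)| ≤ 3 * M :=
    calc _ ≤ (|β (l * t)| + |β t|) + M :=
          (abs_add_le _ _).trans (add_le_add (abs_sub _ _) (hintegral.trans hlength))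
      _ ≤ 3 * M := by linarith [(hM _ (ht.trans hlt)).1, (hM t ht).1]
  rw [hratio, ← exp_neg]
  exact ⟨exp_le_exp.2 (neg_le_of_abs_le hbound), exp_le_exp.2 (le_of_abs_le hbound)⟩

/-- Representation theorem for the class RO: `α ∈ RO` iff
`α(t) = exp(β(t) + ∫₁ᵗ γ(τ)/τ dτ)` for `t ≥ 1` with `β, γ` Borel measurable and
bounded on `[1,∞)`. -/
theorem ro_representation (α : ℝ → ℝ) :
    RO α ↔
    ∃ β γ : ℝ → ℝ, (Measurable fun t : Set.Ici (1:ℝ) => β t.1) ∧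
      (Measurable fun t : Set.Ici (1:ℝ) => γ t.1) ∧
      (∃ M : ℝ, ∀ t, 1 ≤ t → |β t| ≤ M ∧ |γ t| ≤ M) ∧
      (∀ t, 1 ≤ t → α t = Real.exp (β t + ∫ τ in Set.Ioc (1:ℝ) t, γ τ / τ)) :=
  ⟨exists_exp_add_setIntegral_of_RO, fun ⟨_, _, hβ, hγ, ⟨_, hM⟩, hα⟩ =>
    RO_of_exp_add_setIntegral hβ hγ hM hα⟩
end
end

section
/- Let α ∈ RO satisfy the Hörmander integrability condition ∫₁^∞ t^{2l+n-1} α(t)^{-2} dt < ∞ for a nonnegative integer l. Then every w ∈ H^α(ℝⁿ) coincides (as a distribution) with a function of class C^l(ℝⁿ), and moreover the derivatives of order ≤ l are bounded: there exists C > 0 with sup_{|β|≤l} ‖∂^β w‖_∞ ≤ C ‖w‖_α. -/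
/-!
By Cauchy–Schwarz, `∫ ⟨ξ⟩^l |ŵ| ≤ (∫ ⟨ξ⟩^{2l} α(⟨ξ⟩)⁻² dξ)^{1/2} ‖w‖_α`. In polar coordinates the
first factor is finite: near the origin the integrand is bounded, and for `|ξ| ≥ 1` the RO
condition gives `α(⟨ξ⟩) ≳ α(|ξ|)` since `|ξ| ≤ ⟨ξ⟩ ≤ √2 |ξ|`, so it is dominated by the Hörmander
integral. Hence `|ξ|^i ŵ` is integrable for `i ≤ l`, and differentiating the inverse Fourier
integral under the integral sign gives `w ∈ C^l` with `‖Dⁱw‖_∞ ≤ (2π)^i ∫ |ξ|^i |ŵ|`.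
-/

noncomputable section
open MeasureTheory Filter Set Real

open scoped ENNReal NNReal

abbrev Eucl (n : ℕ) := EuclideanSpace ℝ (Fin n)

/-- The smoothed modulus `⟨ξ⟩ = (1+|ξ|²)^{1/2}`. -/
def jap {n : ℕ} (ξ : Eucl n) : ℝ := Real.sqrt (1 + ‖ξ‖ ^ 2)

/-- The norm of the generalized Sobolev space `H^α(ℝⁿ)` computed on the
Fourier-transform side: `‖w‖_α = (∫ α(⟨ξ⟩)² |ŵ(ξ)|² dξ)^{1/2}`, as an `ℝ≥0∞` value. -/
def HnormE {n : ℕ} (α : ℝ → ℝ) (W : Eucl n → ℂ) : ℝ≥0∞ :=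
  (∫⁻ ξ, ENNReal.ofReal ((α (jap ξ)) ^ 2) * (‖W ξ‖₊ : ℝ≥0∞) ^ 2) ^ (1/2 : ℝ)

open scoped FourierTransform

theorem lintegral_ofReal_mul_le_weighted {X : Type*} [MeasurableSpace X] {μ : Measure X}
    {g ω : X → ℝ} {F : X → ℝ≥0∞} (hg : AEMeasurable g μ) (hω : AEMeasurable ω μ)
    (hF : AEMeasurable F μ) (hg0 : ∀ x, 0 ≤ g x) (hω0 : ∀ x, 0 < ω x) :
    ∫⁻ x, ENNReal.ofReal (g x) * F x ∂μ ≤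
      (∫⁻ x, ENNReal.ofReal ((g x / ω x) ^ 2) ∂μ) ^ (1 / 2 : ℝ) *
        (∫⁻ x, ENNReal.ofReal (ω x ^ 2) * F x ^ 2 ∂μ) ^ (1 / 2 : ℝ) := by
  have hsplit : ∀ x, ENNReal.ofReal (g x) * F x =
      ENNReal.ofReal (g x / ω x) * (ENNReal.ofReal (ω x) * F x) := fun x ↦ by
    rw [← mul_assoc, ← ENNReal.ofReal_mul (div_nonneg (hg0 x) (hω0 x).le),
      div_mul_cancel₀ _ (hω0 x).ne']
  simp_rw [hsplit, ENNReal.ofReal_pow (div_nonneg (hg0 _) (hω0 _).le),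
    ENNReal.ofReal_pow (hω0 _).le, ← mul_pow]
  simpa only [← ENNReal.rpow_natCast, Nat.cast_ofNat, Pi.mul_apply, Pi.div_apply] using
    ENNReal.lintegral_mul_le_Lp_mul_Lq μ Real.HolderConjugate.two_two
      (hg.div hω).ennreal_ofReal (hω.ennreal_ofReal.mul hF)

theorem integrable_and_integral_le_of_lintegral_le {X : Type*} [MeasurableSpace X]
    {μ : Measure X} {f : X → ℝ} (hf : AEMeasurable f μ) (hf0 : ∀ x, 0 ≤ f x) {B : ℝ≥0∞}
    (hB : B ≠ ⊤) (h : ∫⁻ x, ENNReal.ofReal (f x) ∂μ ≤ B) :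
    Integrable f μ ∧ ∫ x, f x ∂μ ≤ B.toReal := by
  refine ⟨⟨hf.aestronglyMeasurable,
    (hasFiniteIntegral_iff_ofReal (.of_forall hf0)).2 (h.trans_lt hB.lt_top)⟩, ?_⟩
  rw [integral_eq_lintegral_of_nonneg_ae (.of_forall hf0) hf.aestronglyMeasurable]
  exact ENNReal.toReal_mono hB h

section FourierInv

variable {V E : Type*} [NormedAddCommGroup V] [InnerProductSpace ℝ V] [FiniteDimensional ℝ V]
  [MeasurableSpace V] [BorelSpace V] [NormedAddCommGroup E] [NormedSpace ℂ E]
  {f : V → E} {N : ℕ∞}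

theorem Real.contDiff_fourierInv (hf : ∀ k : ℕ, k ≤ N → Integrable (fun v ↦ ‖v‖ ^ k * ‖f v‖)) :
    ContDiff ℝ N (𝓕⁻ f) := by
  rw [Real.fourierInv_eq_fourier_comp_neg]
  exact Real.contDiff_fourier fun k hk ↦ by simpa using (hf k hk).comp_neg

theorem Real.norm_iteratedFDeriv_fourierInv_le [CompleteSpace E]
    (hf : ∀ k : ℕ, k ≤ N → Integrable (fun v ↦ ‖v‖ ^ k * ‖f v‖)) (h'f : AEStronglyMeasurable f)
    {k : ℕ} (hk : k ≤ N) (x : V) :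
    ‖iteratedFDeriv ℝ k (𝓕⁻ f) x‖ ≤ (2 * π) ^ k * ∫ v, ‖v‖ ^ k * ‖f v‖ := by
  have hneg : ∀ k : ℕ, k ≤ N → Integrable (fun v ↦ ‖v‖ ^ k * ‖f (-v)‖) := fun k hk ↦ by
    simpa using (hf k hk).comp_neg
  rw [Real.fourierInv_eq_fourier_comp_neg, Real.iteratedFDeriv_fourier hneg
    (h'f.comp_measurePreserving (Measure.measurePreserving_neg _)) hk]
  calc _ ≤ ∫ v, ‖VectorFourier.fourierPowSMulRight (innerSL ℝ) (fun v ↦ f (-v)) v k‖ :=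
        VectorFourier.norm_fourierIntegral_le_integral_norm _ _ _ _ _
    _ ≤ ∫ v, (2 * π) ^ k * (‖v‖ ^ k * ‖f (-v)‖) := by
        refine integral_mono_of_nonneg (.of_forall fun v ↦ norm_nonneg _)
          ((hneg k hk).const_mul _) (.of_forall fun v ↦ ?_)
        dsimp only
        grw [VectorFourier.norm_fourierPowSMulRight_le, norm_innerSL_le]
        simp [mul_assoc]
    _ = (2 * π) ^ k * ∫ v, ‖v‖ ^ k * ‖f v‖ := by
        rw [integral_const_mul, ← integral_neg_eq_self]
        simp

end FourierInv

namespace RO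

variable {α : ℝ → ℝ}

theorem pos (hα : RO α) {t : ℝ} (ht : 1 ≤ t) : 0 < α t := hα.1 t ht

theorem measurable_comp (hα : RO α) {X : Type*} [MeasurableSpace X] {f : X → ℝ}
    (hf : Measurable f) (hf1 : ∀ x, 1 ≤ f x) : Measurable fun x ↦ α (f x) :=
  hα.2.1.comp (hf.subtype_mk (h := hf1))

theorem exists_pos_mul_le_apply_mul (hα : RO α) (Λ : ℝ) :
    ∃ m > 0, ∀ t, 1 ≤ t → ∀ s ∈ Icc 1 Λ, m * α t ≤ α (s * t) := by
  obtain ⟨hpos, -, b, hb, c, hc, hbc⟩ := hα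
  have hb0 : 0 < b := zero_lt_one.trans hb
  -- Factor `s ∈ [1, b ^ (k + 1)]` as `(s / s') * s'` with `s' = max 1 (s / b) ∈ [1, b ^ k]`.
  have iter : ∀ k : ℕ, ∀ t, 1 ≤ t → ∀ s ∈ Icc 1 (b ^ k), (c ^ k)⁻¹ * α t ≤ α (s * t) := by
    intro k
    induction k with
    | zero =>
      intro t _ s hs
      simp [le_antisymm (by simpa using hs.2) hs.1]
    | succ k ih =>
      intro t ht s ⟨hs1, hs⟩
      set s' := max 1 (s / b)
      have hs'0 : 0 < s' := zero_lt_one.trans_le (le_max_left _ _)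
      have hs' : s' ∈ Icc 1 (b ^ k) := ⟨le_max_left _ _, max_le (one_le_pow₀ hb.le)
        (by rw [div_le_iff₀ hb0]; simpa [pow_succ] using hs)⟩
      have hq1 : 1 ≤ s / s' := (one_le_div hs'0).2 (max_le hs1 (div_le_self (by linarith) hb.le))
      have hqb : s / s' ≤ b := by
        rw [div_le_iff₀ hs'0, ← div_le_iff₀' hb0]
        exact le_max_right _ _
      have hst : 1 ≤ s' * t := one_le_mul_of_one_le_of_one_le hs'.1 ht
      have step := (hbc (s' * t) hst (s / s') hq1 hqb).1
      rw [le_div_iff₀ (hpos _ hst), ← mul_assoc, div_mul_cancel₀ _ hs'0.ne'] at step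
      calc (c ^ (k + 1))⁻¹ * α t = c⁻¹ * ((c ^ k)⁻¹ * α t) := by rw [pow_succ']; ring
        _ ≤ c⁻¹ * α (s' * t) := by gcongr; exact ih t ht s' hs'
        _ ≤ α (s * t) := step
  obtain ⟨k, hk⟩ := pow_unbounded_of_one_lt Λ hb
  exact ⟨(c ^ k)⁻¹, by positivity, fun t ht s hs ↦ iter k t ht s ⟨hs.1, hs.2.trans hk.le⟩⟩

end RO

theorem one_le_sqrt_one_add_sq (r : ℝ) : 1 ≤ √(1 + r ^ 2) :=
  Real.one_le_sqrt.2 (le_add_of_nonneg_right (sq_nonneg r))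

theorem abs_le_sqrt_one_add_sq (r : ℝ) : |r| ≤ √(1 + r ^ 2) :=
  Real.abs_le_sqrt (le_add_of_nonneg_left zero_le_one)

theorem sqrt_one_add_sq_le {r : ℝ} (hr : 1 ≤ r) : √(1 + r ^ 2) ≤ √2 * r := by
  calc √(1 + r ^ 2) ≤ √(2 * r ^ 2) := Real.sqrt_le_sqrt (by nlinarith)
    _ = √2 * r := by rw [Real.sqrt_mul zero_le_two, Real.sqrt_sq (zero_le_one.trans hr)]

theorem sq_pow_div_le_of_le_sqrt_two_mul {s t a b : ℝ} (l : ℕ) (hs : 0 ≤ s)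
    (hst : s ≤ √2 * t) (hb : 0 < b) (hba : b ≤ a) :
    (s ^ l / a) ^ 2 ≤ 2 ^ l * t ^ (2 * l) / b ^ 2 := by
  calc (s ^ l / a) ^ 2 ≤ ((√2 * t) ^ l / b) ^ 2 := by
        have := hb.trans_le hba
        have : 0 ≤ t := (mul_nonneg_iff_of_pos_left (by positivity)).1 (hs.trans hst)
        gcongr
    _ = 2 ^ l * t ^ (2 * l) / b ^ 2 := by
        rw [div_pow, mul_pow, mul_pow, ← pow_mul, ← pow_mul, mul_comm l 2, pow_mul √2,
          Real.sq_sqrt zero_le_two]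

theorem one_le_jap {n : ℕ} (ξ : Eucl n) : 1 ≤ jap ξ := one_le_sqrt_one_add_sq ‖ξ‖

theorem norm_le_jap {n : ℕ} (ξ : Eucl n) : ‖ξ‖ ≤ jap ξ :=
  (abs_norm ξ).symm.trans_le (abs_le_sqrt_one_add_sq ‖ξ‖)

theorem continuous_jap {n : ℕ} : Continuous (jap (n := n)) := by
  unfold jap
  fun_prop

theorem norm_pow_le_jap_pow {n i l : ℕ} (hi : i ≤ l) (ξ : Eucl n) : ‖ξ‖ ^ i ≤ jap ξ ^ l :=
  (pow_le_pow_left₀ (norm_nonneg ξ) (norm_le_jap ξ) i).trans (pow_le_pow_right₀ (one_le_jap ξ) hi)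

theorem integrable_jap_pow_div_sq {n l : ℕ} (hn : 1 ≤ n) {α : ℝ → ℝ} (hα : RO α)
    (hint : IntegrableOn
      (fun t : ℝ => t ^ (2 * (l : ℝ) + n - 1) * ((α t)⁻¹) ^ 2) (Set.Ici 1)) :
    Integrable fun ξ : Eucl n ↦ (jap ξ ^ l / α (jap ξ)) ^ 2 := by
  have : Nontrivial (Eucl n) :=
    Module.nontrivial_of_finrank_pos (R := ℝ) (by rw [finrank_euclideanSpace_fin]; exact hn)
  set ρ : ℝ → ℝ := fun r ↦ (√(1 + r ^ 2) ^ l / α √(1 + r ^ 2)) ^ 2 with hρ_def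
  have hρ : Measurable ρ := by
    rw [hρ_def]
    exact ((by fun_prop : Measurable fun r : ℝ ↦ √(1 + r ^ 2) ^ l).div
      (hα.measurable_comp (by fun_prop) one_le_sqrt_one_add_sq)).pow_const 2
  obtain ⟨m, hm, hαm⟩ := hα.exists_pos_mul_le_apply_mul √2
  change Integrable fun ξ : Eucl n ↦ ρ ‖ξ‖
  rw [integrable_fun_norm_addHaar, finrank_euclideanSpace_fin,
    ← Ioc_union_Ioi_eq_Ioi zero_le_one]
  refine IntegrableOn.union ?_ ?_
  · refine IntegrableOn.of_bound measure_Ioc_lt_top (by fun_prop) (2 ^ l / (m * α 1) ^ 2)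
      ((ae_restrict_mem measurableSet_Ioc).mono fun r ⟨hr0, hr1⟩ ↦ ?_)
    have hs := one_le_sqrt_one_add_sq r
    have hs2 : √(1 + r ^ 2) ≤ √2 * 1 := by
      rw [mul_one]; exact Real.sqrt_le_sqrt (by nlinarith)
    have hρr : ρ r ≤ 2 ^ l / (m * α 1) ^ 2 := by
      simpa using sq_pow_div_le_of_le_sqrt_two_mul l (by positivity) hs2
        (mul_pos hm (hα.pos le_rfl)) (by simpa using hαm 1 le_rfl _ ⟨hs, by simpa using hs2⟩)
    rw [norm_smul, Real.norm_of_nonneg (by positivity), Real.norm_of_nonneg (by positivity)]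
    exact (mul_le_of_le_one_left (by positivity) (pow_le_one₀ hr0.le hr1)).trans hρr
  · refine ((hint.mono_set Ioi_subset_Ici_self).const_mul (2 ^ l / m ^ 2)).mono' (by fun_prop)
      ((ae_restrict_mem measurableSet_Ioi).mono fun r (hr : 1 < r) ↦ ?_)
    have hr0 : 0 < r := zero_lt_one.trans hr
    have hs2 := sqrt_one_add_sq_le hr.le
    have hq : √(1 + r ^ 2) / r ∈ Icc 1 √2 := ⟨(one_le_div hr0).2 (by
      simpa [abs_of_pos hr0] using abs_le_sqrt_one_add_sq r), (div_le_iff₀ hr0).2 hs2⟩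
    have hρr : ρ r ≤ 2 ^ l * r ^ (2 * l) / (m * α r) ^ 2 :=
      sq_pow_div_le_of_le_sqrt_two_mul l (by positivity) hs2 (mul_pos hm (hα.pos hr.le))
        (by simpa [div_mul_cancel₀ _ hr0.ne'] using hαm r hr.le _ hq)
    have hexp : r ^ (2 * (l : ℝ) + n - 1) = r ^ (n - 1) * r ^ (2 * l) := by
      rw [← pow_add, ← Real.rpow_natCast]
      congr 1
      push_cast [Nat.cast_sub hn]
      ring
    rw [norm_smul, Real.norm_of_nonneg (by positivity), Real.norm_of_nonneg (by positivity), hexp]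
    calc r ^ (n - 1) * ρ r ≤ r ^ (n - 1) * (2 ^ l * r ^ (2 * l) / (m * α r) ^ 2) := by gcongr
      _ = 2 ^ l / m ^ 2 * (r ^ (n - 1) * r ^ (2 * l) * (α r)⁻¹ ^ 2) := by ring

theorem lintegral_norm_pow_mul_norm_le_HnormE {n i l : ℕ} (hi : i ≤ l) {α : ℝ → ℝ} (hα : RO α)
    {W : Eucl n → ℂ} (hW : Measurable W) :
    ∫⁻ ξ, ENNReal.ofReal (‖ξ‖ ^ i * ‖W ξ‖) ≤
      (∫⁻ ξ : Eucl n, ENNReal.ofReal ((jap ξ ^ l / α (jap ξ)) ^ 2)) ^ (1 / 2 : ℝ) *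
        HnormE α W :=
  calc ∫⁻ ξ, ENNReal.ofReal (‖ξ‖ ^ i * ‖W ξ‖)
      ≤ ∫⁻ ξ, ENNReal.ofReal (jap ξ ^ l) * ‖W ξ‖ₑ := lintegral_mono fun ξ ↦ by
        rw [ENNReal.ofReal_mul (by positivity), ofReal_norm]
        gcongr
        exact norm_pow_le_jap_pow hi ξ
    _ ≤ _ := lintegral_ofReal_mul_le_weighted
        (continuous_jap.measurable.pow_const l).aemeasurable
        (hα.measurable_comp continuous_jap.measurable one_le_jap).aemeasurable (by fun_prop)
        (fun ξ ↦ pow_nonneg (zero_le_one.trans (one_le_jap ξ)) l) (fun ξ ↦ hα.pos (one_le_jap ξ))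

/-- Hörmander embedding theorem: if `∫₁^∞ t^{2l+n-1} α(t)⁻² dt < ∞`, then every
`w ∈ H^α(ℝⁿ)` (given on the Fourier side by `W = ŵ`, so `w = 𝓕⁻ W`) is of class `C^l`
with all derivatives of order `≤ l` bounded by `C ‖w‖_α`. -/
theorem hoermander_embedding (n l : ℕ) (hn : 1 ≤ n) (α : ℝ → ℝ) (hα : RO α)
    (hint : IntegrableOn
      (fun t : ℝ => t ^ (2 * (l : ℝ) + n - 1) * ((α t)⁻¹) ^ 2) (Set.Ici 1)) :
    ∃ C : ℝ, 0 < C ∧ ∀ W : Eucl n → ℂ, Measurable W → HnormE α W < ⊤ →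
      ContDiff ℝ (l : ℕ∞) (𝓕⁻ W) ∧
      ∀ i : ℕ, i ≤ l → ∀ x : Eucl n,
        ‖iteratedFDeriv ℝ i (𝓕⁻ W) x‖ ≤ C * (HnormE α W).toReal := by
  set K := (∫⁻ ξ : Eucl n, ENNReal.ofReal ((jap ξ ^ l / α (jap ξ)) ^ 2)) ^ (1 / 2 : ℝ)
  have hK : K ≠ ⊤ := ENNReal.rpow_ne_top_of_nonneg (by norm_num)
    (integrable_jap_pow_div_sq hn hα hint).lintegral_lt_top.ne
  refine ⟨(2 * π) ^ l * (K.toReal + 1), by positivity, fun W hW hWfin ↦ ?_⟩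
  have hmoment : ∀ i ≤ l, Integrable (fun ξ ↦ ‖ξ‖ ^ i * ‖W ξ‖) ∧
      ∫ ξ, ‖ξ‖ ^ i * ‖W ξ‖ ≤ (K * HnormE α W).toReal := fun i hi ↦
    integrable_and_integral_le_of_lintegral_le (by fun_prop) (fun ξ ↦ by positivity)
      (ENNReal.mul_ne_top hK hWfin.ne) (lintegral_norm_pow_mul_norm_le_HnormE hi hα hW)
  have hint' : ∀ i : ℕ, (i : ℕ∞) ≤ l → Integrable (fun ξ ↦ ‖ξ‖ ^ i * ‖W ξ‖) :=
    fun i hi ↦ (hmoment i (mod_cast hi)).1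
  refine ⟨Real.contDiff_fourierInv hint', fun i hi x ↦ ?_⟩
  have h2π : 1 ≤ 2 * π := by linarith [Real.pi_gt_three]
  calc ‖iteratedFDeriv ℝ i (𝓕⁻ W) x‖
      ≤ (2 * π) ^ i * ∫ ξ, ‖ξ‖ ^ i * ‖W ξ‖ :=
        Real.norm_iteratedFDeriv_fourierInv_le hint' hW.aestronglyMeasurable (mod_cast hi) x
    _ ≤ (2 * π) ^ l * (K.toReal * (HnormE α W).toReal) := by
        rw [← ENNReal.toReal_mul]
        exact mul_le_mul (pow_le_pow_right₀ h2π hi) (hmoment i hi).2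
          (integral_nonneg fun ξ ↦ by positivity) (by positivity)
    _ ≤ (2 * π) ^ l * (K.toReal + 1) * (HnormE α W).toReal := by
        rw [mul_assoc]
        gcongr
        linarith
end
end
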